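/- Suppose k = 2 (so m = 2n) and let s_1 and s_2 be agent a_1's most preferred and second most preferred items in I. There exists a recursively balanced policy under which agent a_1 receives exactly {s_1, s_2} if and only if the bipartite graph with vertex parts A ∖ {a_1} and I ∖ {s_1}, having an edge between agent a and item o exactly when a strictly prefers o to s_2, admits a matching that saturates A ∖ {a_1} (matches every agent other than a_1). -/

import Mathlib

open Finset
open scoped Classical

/-- The most preferred item of a nonempty finset w.r.t. a linear order
(greater means more preferred). -/
noncomputable def favorite {ι : Type} (L : LinearOrder ι) (S : Finset ι) (h : S.Nonempty) : ι :=
  @Finset.max' ι L S h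

/-- Sequential allocation: process the turns in order; at each turn the agent whose
turn it is picks her most preferred item among the items not yet allocated.
Returns the list of (agent, item) picks, in order. -/
noncomputable def seqAlloc {n : ℕ} {ι : Type} [DecidableEq ι]
    (P : Fin n → LinearOrder ι) : List (Fin n) → Finset ι → List (Fin n × ι)
  | [], _ => []
  | a :: rest, S =>
    if h : S.Nonempty then
      (a, favorite (P a) S h) :: seqAlloc P rest (S.erase (favorite (P a) S h))
    else []

/-- `M` is the outcome of the policy `π`: every item is picked by the agent that
`M` assigns it to. -/
def IsOutcome {n : ℕ} {ι : Type} [Fintype ι] [DecidableEq ι]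
    (P : Fin n → LinearOrder ι) (π : List (Fin n)) (M : ι → Fin n) : Prop :=
  ∀ o : ι, (M o, o) ∈ seqAlloc P π Finset.univ

/-- The set of items that agent `a` picks under the policy `π`. -/
noncomputable def receives {n : ℕ} {ι : Type} [Fintype ι] [DecidableEq ι]
    (P : Fin n → LinearOrder ι) (π : List (Fin n)) (a : Fin n) : Finset ι :=
  Finset.univ.filter (fun o => (a, o) ∈ seqAlloc P π Finset.univ)

/-- An allocation `M` is Pareto optimal if there is no bijection `f` of the items such
that every agent weakly prefers `f o` to `o` for each item `o` she gets, with at least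
one strict preference. -/
def ParetoOptimal {n : ℕ} {ι : Type} (P : Fin n → LinearOrder ι) (M : ι → Fin n) : Prop :=
  ¬ ∃ f : ι ≃ ι, (∀ o : ι, (P (M o)).le o (f o)) ∧ (∃ o : ι, (P (M o)).lt o (f o))

/-- A policy is balanced if every agent has exactly `k` turns. -/
def BalancedPolicy {n : ℕ} (k : ℕ) (π : List (Fin n)) : Prop :=
  ∀ a : Fin n, π.count a = k

/-- An allocation is balanced if every agent receives exactly `k` items. -/
def BalancedAlloc {n : ℕ} {ι : Type} [Fintype ι] (k : ℕ) (M : ι → Fin n) : Prop :=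
  ∀ a : Fin n, (Finset.univ.filter (fun o => M o = a)).card = k

/-- A policy is recursively balanced if it splits into `k` consecutive rounds of `n`
turns each, every agent having exactly one turn in each round. -/
def RecBalanced (n k : ℕ) (π : List (Fin n)) : Prop :=
  ∃ rounds : List (List (Fin n)), rounds.length = k ∧
    (∀ r ∈ rounds, r.length = n ∧ ∀ a : Fin n, r.count a = 1) ∧
    π = rounds.flatten

/-- A strict alternation policy: every one of the `k` rounds uses the same order `σ`
over the agents. -/
def StrictAlt (n k : ℕ) (π : List (Fin n)) : Prop :=
  ∃ σ : List (Fin n), σ.length = n ∧ (∀ a : Fin n, σ.count a = 1) ∧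
    π = (List.replicate k σ).flatten

/-- A balanced alternation policy: odd-numbered rounds use the order `σ` over the agents
and even-numbered rounds use its reverse. -/
def BalAlt (n k : ℕ) (π : List (Fin n)) : Prop :=
  ∃ σ : List (Fin n), σ.length = n ∧ (∀ a : Fin n, σ.count a = 1) ∧
    π = ((List.range k).map (fun r => if r % 2 = 0 then σ else σ.reverse)).flatten

/-- `p j i` (for `1 ≤ i ≤ k`) is the item ranked `i`-th by agent `j` among the items `M`
allocates to `j`: it is allocated to `j`, and exactly `i - 1` of the items allocated
to `j` are strictly preferred to it by agent `j`. -/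
def IsRankingOf {n : ℕ} {ι : Type} [Fintype ι] (P : Fin n → LinearOrder ι) (k : ℕ)
    (M : ι → Fin n) (p : Fin n → ℕ → ι) : Prop :=
  ∀ (j : Fin n) (i : ℕ), 1 ≤ i → i ≤ k →
    M (p j i) = j ∧
    (Finset.univ.filter (fun o => M o = j ∧ (P j).lt (p j i) o)).card = i - 1

/-- Condition 3: for all `1 ≤ t < s ≤ k` and all agents `j, j'`, agent `j` strictly
prefers `p j t` to `p j' s`. -/
def Cond3 {n : ℕ} {ι : Type} (P : Fin n → LinearOrder ι) (k : ℕ) (p : Fin n → ℕ → ι) : Prop :=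
  ∀ t s : ℕ, 1 ≤ t → t < s → s ≤ k → ∀ j j' : Fin n, (P j).lt (p j' s) (p j t)

/-- The edge relation of the directed graph `G_M`: for odd `i ≤ k` an edge `a → b`
whenever `b` strictly prefers `p a i` to `p b i`, and for even `i ≤ k` an edge `a → b`
whenever `a` strictly prefers `p b i` to `p a i`. -/
def GM {n : ℕ} {ι : Type} (P : Fin n → LinearOrder ι) (k : ℕ) (p : Fin n → ℕ → ι)
    (a b : Fin n) : Prop :=
  (∃ i : ℕ, 1 ≤ i ∧ i ≤ k ∧ i % 2 = 1 ∧ (P b).lt (p b i) (p a i)) ∨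
  (∃ i : ℕ, 1 ≤ i ∧ i ≤ k ∧ i % 2 = 0 ∧ (P a).lt (p a i) (p b i))

/-- The edge relation of the directed graph `H_M`: for each `i ≤ k` an edge `a → b`
whenever `b` strictly prefers `p a i` to `p b i`. -/
def HM {n : ℕ} {ι : Type} (P : Fin n → LinearOrder ι) (k : ℕ) (p : Fin n → ℕ → ι)
    (a b : Fin n) : Prop :=
  ∃ i : ℕ, 1 ≤ i ∧ i ≤ k ∧ (P b).lt (p b i) (p a i)

/-- The `k` most preferred items of agent `j`: those items with fewer than `k` items
strictly preferred to them by `j`. -/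
noncomputable def topItems {n : ℕ} {ι : Type} [Fintype ι] (P : Fin n → LinearOrder ι)
    (k : ℕ) (j : Fin n) : Finset ι :=
  Finset.univ.filter (fun o => (Finset.univ.filter (fun o' => (P j).lt o o')).card < k)

/-- The rank of item `o` in agent `j`'s preference (the most preferred item has rank 1). -/
noncomputable def rankOf {n : ℕ} {ι : Type} [Fintype ι] (P : Fin n → LinearOrder ι)
    (j : Fin n) (o : ι) : ℕ :=
  (Finset.univ.filter (fun o' => (P j).lt o o')).card + 1

/-!
Only the first round matters. If `a1` receives `{s1, s2}`, she takes `s1` in the first round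
(nobody else ever takes it) and `s2` in the second, so `s2` survives the first round and every
other agent's first-round pick is an item other than `s1` that she prefers to `s2`; these picks
form the matching. Conversely, a matching yields an order `σ` of the other agents under which
sequential allocation from `I ∖ {s1}` never takes `s2`: in some matching, some agent's favourite
item is held by nobody else (otherwise rotate the matching along a cycle of the map sending an
agent to the holder of her favourite), so she can pick first and we recurse. The policy
`a1, σ, a1, σ` then gives `a1` exactly `s1` and `s2`.
-/

theorem favorite_mem {ι : Type} (L : LinearOrder ι) {S : Finset ι} (h : S.Nonempty) :
    favorite L S h ∈ S :=
  @Finset.max'_mem ι L S h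

theorem le_favorite {ι : Type} (L : LinearOrder ι) {S : Finset ι} (h : S.Nonempty) {x : ι}
    (hx : x ∈ S) : L.le x (favorite L S h) :=
  @Finset.le_max' ι L S x hx

section SeqAlloc

variable {ι : Type} [DecidableEq ι] {n : ℕ} (P : Fin n → LinearOrder ι)

@[simp]
theorem seqAlloc_nil (S : Finset ι) : seqAlloc P [] S = [] := by
  simp [seqAlloc]

@[simp]
theorem seqAlloc_empty (π : List (Fin n)) : seqAlloc P π ∅ = [] := by
  cases π <;> simp [seqAlloc]

theorem seqAlloc_cons (a : Fin n) (π : List (Fin n)) {S : Finset ι} (h : S.Nonempty) :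
    seqAlloc P (a :: π) S =
      (a, favorite (P a) S h) :: seqAlloc P π (S.erase (favorite (P a) S h)) := by
  simp [seqAlloc, h]

theorem seqAlloc_append (π₁ π₂ : List (Fin n)) (S : Finset ι) :
    seqAlloc P (π₁ ++ π₂) S =
      seqAlloc P π₁ S ++ seqAlloc P π₂ (S \ ((seqAlloc P π₁ S).map Prod.snd).toFinset) := by
  induction π₁ generalizing S with
  | nil => simp
  | cons a π₁ ih =>
    rcases S.eq_empty_or_nonempty with rfl | hS
    · simp
    rw [List.cons_append, seqAlloc_cons P a _ hS, seqAlloc_cons P a _ hS, ih]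
    congr 3
    ext y
    simp only [List.map_cons, List.toFinset_cons, mem_sdiff, mem_erase, mem_insert]
    tauto

theorem fst_mem_of_mem_seqAlloc {π : List (Fin n)} {S : Finset ι} {p : Fin n × ι}
    (hp : p ∈ seqAlloc P π S) : p.1 ∈ π := by
  induction π generalizing S with
  | nil => simp at hp
  | cons a π ih =>
    rcases S.eq_empty_or_nonempty with rfl | hS
    · simp at hp
    rw [seqAlloc_cons P a π hS, List.mem_cons] at hp
    rcases hp with rfl | hp
    · exact List.mem_cons_self
    · exact List.mem_cons_of_mem a (ih hp)

theorem snd_mem_of_mem_seqAlloc {π : List (Fin n)} {S : Finset ι} {p : Fin n × ι}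
    (hp : p ∈ seqAlloc P π S) : p.2 ∈ S := by
  induction π generalizing S with
  | nil => simp at hp
  | cons a π ih =>
    rcases S.eq_empty_or_nonempty with rfl | hS
    · simp at hp
    rw [seqAlloc_cons P a π hS, List.mem_cons] at hp
    rcases hp with rfl | hp
    · exact favorite_mem _ hS
    · exact mem_of_mem_erase (ih hp)

theorem nodup_map_snd_seqAlloc (π : List (Fin n)) (S : Finset ι) :
    ((seqAlloc P π S).map Prod.snd).Nodup := by
  induction π generalizing S with
  | nil => simp
  | cons a π ih =>
    rcases S.eq_empty_or_nonempty with rfl | hS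
    · simp
    rw [seqAlloc_cons P a π hS, List.map_cons, List.nodup_cons]
    refine ⟨fun hmem => ?_, ih _⟩
    obtain ⟨p, hp, hpx⟩ := List.mem_map.mp hmem
    exact notMem_erase _ S (hpx ▸ snd_mem_of_mem_seqAlloc P hp)

theorem map_fst_seqAlloc {π : List (Fin n)} {S : Finset ι} (h : π.length ≤ S.card) :
    (seqAlloc P π S).map Prod.fst = π := by
  induction π generalizing S with
  | nil => simp
  | cons a π ih =>
    rw [List.length_cons] at h
    have hS : S.Nonempty := card_pos.mp (by omega)
    rw [seqAlloc_cons P a π hS, List.map_cons,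
      ih (by rw [card_erase_of_mem (favorite_mem _ hS)]; omega)]

theorem le_of_seqAlloc_eq_append {π : List (Fin n)} {S : Finset ι}
    {l₁ l₂ : List (Fin n × ι)} {a : Fin n} {x y : ι}
    (h : seqAlloc P π S = l₁ ++ (a, x) :: l₂) (hy : y ∈ S) (hy' : y ∉ l₁.map Prod.snd) :
    (P a).le y x := by
  induction π generalizing S l₁ with
  | nil => simp at h
  | cons b π ih =>
    rcases S.eq_empty_or_nonempty with rfl | hS
    · simp at hy
    rw [seqAlloc_cons P b π hS] at h
    rcases l₁ with _ | ⟨p, l₁⟩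
    · obtain ⟨rfl, rfl⟩ := Prod.mk.inj (List.cons.inj h).1
      exact le_favorite _ hS hy
    · rw [List.cons_append] at h
      obtain ⟨rfl, hrest⟩ := List.cons.inj h
      simp only [List.map_cons, List.mem_cons, not_or] at hy'
      exact ih hrest (mem_erase.mpr ⟨hy'.1, hy⟩) hy'.2

theorem eq_of_mem_seqAlloc_of_mem {π : List (Fin n)} {S : Finset ι} {a b : Fin n} {x : ι}
    (ha : (a, x) ∈ seqAlloc P π S) (hb : (b, x) ∈ seqAlloc P π S) : a = b :=
  congrArg Prod.fst (List.inj_on_of_nodup_map (nodup_map_snd_seqAlloc P π S) ha hb rfl)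

theorem eq_of_mem_seqAlloc_of_forall_le {π : List (Fin n)} {S : Finset ι} {a : Fin n}
    {x y : ι} (hπ : ((seqAlloc P π S).map Prod.fst).Nodup) (hax : (a, x) ∈ seqAlloc P π S)
    (hy : y ∈ S) (htop : ∀ z, (P a).le z y) (hown : ∀ b, (b, y) ∈ seqAlloc P π S → b = a) :
    x = y := by
  obtain ⟨l₁, l₂, hsplit⟩ := List.append_of_mem hax
  have hyl₁ : y ∉ l₁.map Prod.snd := by
    intro hmem
    obtain ⟨⟨b, _⟩, hb, rfl⟩ := List.mem_map.mp hmem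
    have hba : b = a := hown b (hsplit ▸ List.mem_append_left _ hb)
    rw [hsplit, List.map_append, List.nodup_append] at hπ
    exact hπ.2.2 b (List.mem_map_of_mem hb) a List.mem_cons_self hba
  let _ := P a
  exact le_antisymm (htop x) (le_of_seqAlloc_eq_append P hsplit hy hyl₁)

theorem exists_injective_of_seqAlloc {r : List (Fin n)} {S : Finset ι} {o : ι}
    (hfst : (seqAlloc P r S).map Prod.fst = r) (hall : ∀ a, a ∈ r) (ho : o ∈ S)
    (hno : ∀ p ∈ seqAlloc P r S, p.2 ≠ o) :
    ∃ f : Fin n → ι, Function.Injective f ∧ ∀ a, (a, f a) ∈ seqAlloc P r S ∧ (P a).lt o (f a) := by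
  have hpick : ∀ a, ∃ x, (a, x) ∈ seqAlloc P r S := by
    intro a
    obtain ⟨p, hp, rfl⟩ := List.mem_map.mp (hfst ▸ hall a)
    exact ⟨p.2, hp⟩
  choose f hf using hpick
  refine ⟨f, fun a b hab => eq_of_mem_seqAlloc_of_mem P (hf a) (hab ▸ hf b), fun a => ⟨hf a, ?_⟩⟩
  obtain ⟨l₁, l₂, hsplit⟩ := List.append_of_mem (hf a)
  have hol₁ : o ∉ l₁.map Prod.snd := by
    intro hmem
    obtain ⟨p, hp, rfl⟩ := List.mem_map.mp hmem
    exact hno p (hsplit ▸ List.mem_append_left _ hp) rfl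
  let _ := P a
  exact lt_of_le_of_ne (le_of_seqAlloc_eq_append P hsplit ho hol₁) (hno _ (hf a)).symm

end SeqAlloc

namespace Set

open Function

theorem MapsTo.exists_mem_periodicPts {α : Type*} [Finite α] {g : α → α} {R : Set α}
    (hg : MapsTo g R R) (hR : R.Nonempty) : ∃ c ∈ R, c ∈ periodicPts g := by
  obtain ⟨a, ha⟩ := hR
  obtain ⟨i, j, hij, heq⟩ := Finite.exists_ne_map_eq_of_infinite (fun k => g^[k] a)
  wlog hlt : i < j generalizing i j
  · exact this j i hij.symm heq.symm (by omega)
  refine ⟨g^[i] a, hg.iterate i ha, mk_mem_periodicPts (n := j - i) (by omega) ?_⟩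
  simp only [IsPeriodicPt, IsFixedPt, ← iterate_add_apply, Nat.sub_add_cancel hlt.le]
  exact heq.symm

theorem InjOn.piecewise_periodicPts_comp {α β : Type*} {f : α → β} {g : α → α} {R : Set α}
    [DecidablePred (· ∈ periodicPts g)] (hf : InjOn f R) (hg : MapsTo g R R) :
    InjOn ((periodicPts g).piecewise (f ∘ g) f) R := by
  have hbij := bijOn_periodicPts g
  intro x hx y hy hxy
  by_cases hxp : x ∈ periodicPts g <;> by_cases hyp : y ∈ periodicPts g <;>
    simp only [piecewise, hxp, hyp, if_true, if_false, comp_apply] at hxy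
  · exact hbij.injOn hxp hyp (hf (hg hx) (hg hy) hxy)
  · exact absurd (hf (hg hx) hy hxy ▸ hbij.mapsTo hxp) hyp
  · exact absurd (hf hx (hg hy) hxy ▸ hbij.mapsTo hyp) hxp
  · exact hf hx hy hxy

end Set

section Matching

variable {ι : Type} {n : ℕ} (P : Fin n → LinearOrder ι) (o : ι)

/-- A matching saturating `R` in the bipartite graph joining each agent to the items of `S`
she strictly prefers to `o`. -/
def IsMatchingAbove (R : Finset (Fin n)) (S : Finset ι) (f : Fin n → ι) : Prop :=
  Set.InjOn f R ∧ ∀ a ∈ R, f a ∈ S ∧ (P a).lt o (f a)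

variable {P o}

theorem IsMatchingAbove.lt_favorite {R : Finset (Fin n)} {S : Finset ι} {f : Fin n → ι}
    (hf : IsMatchingAbove P o R S f) {a : Fin n} (ha : a ∈ R) (hS : S.Nonempty) :
    (P a).lt o (favorite (P a) S hS) := by
  let _ := P a
  exact lt_of_lt_of_le (hf.2 a ha).2 (le_favorite _ hS (hf.2 a ha).1)

theorem IsMatchingAbove.exists_favorite_unclaimed {R : Finset (Fin n)} {S : Finset ι}
    {f : Fin n → ι} (hf : IsMatchingAbove P o R S f) (hR : R.Nonempty) (hS : S.Nonempty) :
    ∃ f', IsMatchingAbove P o R S f' ∧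
      ∃ a ∈ R, ∀ b ∈ R, b ≠ a → f' b ≠ favorite (P a) S hS := by
  by_cases hfree : ∃ a ∈ R, ∀ b ∈ R, b ≠ a → f b ≠ favorite (P a) S hS
  · exact ⟨f, hf, hfree⟩
  push Not at hfree
  choose! g hgR hga hgf using hfree
  have hgR' : Set.MapsTo g R R := hgR
  obtain ⟨c, hcR, hc⟩ := hgR'.exists_mem_periodicPts hR
  set f' := (Function.periodicPts g).piecewise (f ∘ g) f
  have hf'inj : Set.InjOn f' R := hf.1.piecewise_periodicPts_comp hgR'
  have hf'fav : ∀ a ∈ R, a ∈ Function.periodicPts g → f' a = favorite (P a) S hS := by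
    intro a ha hap
    simp only [f', Set.piecewise_eq_of_mem _ _ _ hap, Function.comp_apply, hgf a ha]
  refine ⟨f', ⟨hf'inj, fun a ha => ?_⟩, c, hcR, fun b hb hbc hbf => ?_⟩
  · by_cases hap : a ∈ Function.periodicPts g
    · rw [hf'fav a ha hap]
      exact ⟨favorite_mem _ hS, hf.lt_favorite ha hS⟩
    · simp only [f', Set.piecewise_eq_of_notMem _ _ _ hap]
      exact hf.2 a ha
  · exact hbc (hf'inj hb hcR (hbf.trans (hf'fav c hcR hc).symm))

theorem IsMatchingAbove.exists_order_avoiding [DecidableEq ι] {R : Finset (Fin n)} {S : Finset ι}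
    {f : Fin n → ι} (hf : IsMatchingAbove P o R S f) :
    ∃ σ : List (Fin n), σ.Nodup ∧ σ.toFinset = R ∧ ∀ p ∈ seqAlloc P σ S, p.2 ≠ o := by
  induction R using Finset.strongInduction generalizing S f with
  | H R ih =>
    rcases R.eq_empty_or_nonempty with rfl | hR
    · exact ⟨[], List.nodup_nil, rfl, by simp⟩
    have hS : S.Nonempty := ⟨f hR.choose, (hf.2 _ hR.choose_spec).1⟩
    obtain ⟨f', hf', a, haR, hfree⟩ := hf.exists_favorite_unclaimed hR hS
    set x := favorite (P a) S hS
    have hox : (P a).lt o x := hf'.lt_favorite haR hS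
    have hf'' : IsMatchingAbove P o (R.erase a) (S.erase x) f' := by
      refine ⟨hf'.1.mono (by simp), fun b hb => ?_⟩
      obtain ⟨hba, hbR⟩ := mem_erase.mp hb
      exact ⟨mem_erase.mpr ⟨hfree b hbR hba, (hf'.2 b hbR).1⟩, (hf'.2 b hbR).2⟩
    obtain ⟨σ, hσ, hσR, hσo⟩ := ih _ (erase_ssubset haR) hf''
    refine ⟨a :: σ, List.nodup_cons.mpr ⟨fun ha => ?_, hσ⟩, ?_, ?_⟩
    · simpa [hσR] using List.mem_toFinset.mpr ha
    · rw [List.toFinset_cons, hσR, insert_erase haR]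
    · rw [seqAlloc_cons P a σ hS]
      rintro p (_ | ⟨_, hp⟩)
      · let _ := P a
        exact ne_of_gt hox
      · exact hσo p hp

end Matching

theorem recBalanced_flatten_replicate {n k : ℕ} {ρ : List (Fin n)} (hρ : ρ.Nodup)
    (hall : ∀ a, a ∈ ρ) : RecBalanced n k (List.replicate k ρ).flatten := by
  refine ⟨List.replicate k ρ, List.length_replicate, fun r hr => ?_, rfl⟩
  obtain rfl := List.eq_of_mem_replicate hr
  have huniv : r.toFinset = univ := eq_univ_iff_forall.mpr (by simpa using hall)
  refine ⟨?_, fun a => List.count_eq_one_of_mem hρ (hall a)⟩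
  rw [← List.toFinset_card_of_nodup hρ, huniv, card_univ, Fintype.card_fin]

theorem RecBalanced.exists_eq_append {n : ℕ} {π : List (Fin n)} (h : RecBalanced n 2 π) :
    ∃ r₁ r₂, π = r₁ ++ r₂ ∧ r₁.length = n ∧ r₁.Nodup ∧ ∀ a, a ∈ r₁ := by
  obtain ⟨rounds, hlen, hrounds, rfl⟩ := h
  obtain ⟨r₁, r₂, rfl⟩ := List.length_eq_two.mp hlen
  obtain ⟨hr₁, hcount⟩ := hrounds r₁ (by simp)
  exact ⟨r₁, r₂, by simp, hr₁, List.nodup_iff_count_le_one.mpr (fun a => (hcount a).le),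
    fun a => List.count_pos_iff.mp (by rw [hcount a]; exact Nat.one_pos)⟩

section Receives

variable {ι : Type} [Fintype ι] [DecidableEq ι] {n : ℕ} {P : Fin n → LinearOrder ι}

theorem mem_receives {π : List (Fin n)} {a : Fin n} {o : ι} :
    o ∈ receives P π a ↔ (a, o) ∈ seqAlloc P π univ := by
  simp [receives]

theorem exists_matching_of_receives_eq {r₁ r₂ : List (Fin n)} {a1 : Fin n} {s1 s2 : ι}
    (hlen : r₁.length ≤ Fintype.card ι) (hr₁ : r₁.Nodup) (hall : ∀ a, a ∈ r₁)
    (hs1 : ∀ x, (P a1).le x s1) (hs2ne : s2 ≠ s1)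
    (hrec : receives P (r₁ ++ r₂) a1 = {s1, s2}) :
    ∃ f : Fin n → ι, Set.InjOn f {a | a ≠ a1} ∧ ∀ a, a ≠ a1 → f a ≠ s1 ∧ (P a).lt s2 (f a) := by
  set L₁ := seqAlloc P r₁ univ
  have hsub : L₁ ⊆ seqAlloc P (r₁ ++ r₂) univ :=
    seqAlloc_append P r₁ r₂ univ ▸ List.subset_append_left _ _
  have hown : ∀ o, o = s1 ∨ o = s2 → ∀ b, (b, o) ∈ L₁ → b = a1 := fun o ho b hb =>
    eq_of_mem_seqAlloc_of_mem P (hsub hb) (mem_receives.mp (by simpa [hrec] using ho))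
  have hfst : L₁.map Prod.fst = r₁ := map_fst_seqAlloc P (by simpa using hlen)
  have hnodup : (L₁.map Prod.fst).Nodup := hfst ▸ hr₁
  obtain ⟨⟨_, x⟩, hx, rfl⟩ := List.mem_map.mp (hfst ▸ hall a1)
  have hxs1 : x = s1 :=
    eq_of_mem_seqAlloc_of_forall_le P hnodup hx (mem_univ _) hs1 (hown s1 (.inl rfl))
  have hno : ∀ p ∈ L₁, p.2 ≠ s2 := by
    rintro ⟨b, y⟩ hp rfl
    obtain rfl := hown _ (.inr rfl) b hp
    have hpx := List.inj_on_of_nodup_map hnodup hx hp rfl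
    exact hs2ne (hxs1 ▸ congrArg Prod.snd hpx).symm
  obtain ⟨f, hinj, hf⟩ := exists_injective_of_seqAlloc P hfst hall (mem_univ s2) hno
  exact ⟨f, hinj.injOn, fun a ha =>
    ⟨fun h => ha (hown s1 (.inl rfl) a (h ▸ (hf a).1)), (hf a).2⟩⟩

theorem receives_eq_of_seqAlloc_avoids {σ : List (Fin n)} {a1 : Fin n} {s1 s2 : ι}
    (ha1 : a1 ∉ σ) (hs1 : ∀ x, (P a1).le x s1) (hs2ne : s2 ≠ s1)
    (hs2 : ∀ x, x ≠ s1 → (P a1).le x s2) (hσ : ∀ p ∈ seqAlloc P σ (univ.erase s1), p.2 ≠ s2) :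
    receives P ((a1 :: σ) ++ (a1 :: σ)) a1 = {s1, s2} := by
  let _ := P a1
  have hU : (univ : Finset ι).Nonempty := ⟨s1, mem_univ _⟩
  have hfav₁ : favorite (P a1) univ hU = s1 :=
    le_antisymm (hs1 _) (le_favorite _ hU (mem_univ s1))
  set A := seqAlloc P σ (univ.erase s1)
  set T := univ.erase s1 \ (A.map Prod.snd).toFinset
  have hs2T : s2 ∈ T := by
    simp only [T, mem_sdiff, mem_erase, List.mem_toFinset, List.mem_map, not_exists, not_and]
    exact ⟨⟨hs2ne, mem_univ _⟩, hσ⟩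
  have hfav₂ : favorite (P a1) T ⟨s2, hs2T⟩ = s2 :=
    le_antisymm (hs2 _ (ne_of_mem_erase (mem_sdiff.mp (favorite_mem _ _)).1))
      (le_favorite _ _ hs2T)
  have hL : seqAlloc P ((a1 :: σ) ++ (a1 :: σ)) univ =
      (a1, s1) :: (A ++ (a1, s2) :: seqAlloc P σ (T.erase s2)) := by
    rw [List.cons_append, seqAlloc_cons P a1 _ hU, hfav₁, seqAlloc_append,
      seqAlloc_cons P a1 σ ⟨s2, hs2T⟩, hfav₂]
  have hnot : ∀ S o, (a1, o) ∉ seqAlloc P σ S := fun _ _ h =>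
    ha1 (fst_mem_of_mem_seqAlloc P h)
  ext o
  rw [mem_receives, hL]
  simp [A, hnot, eq_comm]

end Receives

theorem top2_possible_set_recursively_balanced_general
    {ι : Type} [Fintype ι] [DecidableEq ι] {n : ℕ}
    (hcard : Fintype.card ι = 2 * n)
    (P : Fin n → LinearOrder ι) (a1 : Fin n) (s1 s2 : ι)
    (hs1 : ∀ x : ι, (P a1).le x s1)
    (hs2ne : s2 ≠ s1) (hs2 : ∀ x : ι, x ≠ s1 → (P a1).le x s2) :
    (∃ π : List (Fin n), RecBalanced n 2 π ∧ receives P π a1 = {s1, s2}) ↔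
      ∃ f : Fin n → ι, Set.InjOn f {a : Fin n | a ≠ a1} ∧
        ∀ a : Fin n, a ≠ a1 → f a ≠ s1 ∧ (P a).lt s2 (f a) := by
  constructor
  · rintro ⟨π, hπ, hrec⟩
    obtain ⟨r₁, r₂, rfl, hlen, hr₁, hall⟩ := hπ.exists_eq_append
    exact exists_matching_of_receives_eq (by omega) hr₁ hall hs1 hs2ne hrec
  · rintro ⟨f, hinj, hf⟩
    have hmatch : IsMatchingAbove P s2 (univ.erase a1) (univ.erase s1) f :=
      ⟨fun a ha b hb => hinj (by simpa using ha) (by simpa using hb), fun a ha =>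
        ⟨mem_erase.mpr ⟨(hf a (ne_of_mem_erase ha)).1, mem_univ _⟩, (hf a (ne_of_mem_erase ha)).2⟩⟩
    obtain ⟨σ, hσ, hσR, hσo⟩ := hmatch.exists_order_avoiding
    have hmem : ∀ a, a ∈ σ ↔ a ≠ a1 := fun a => by simpa using congrArg (a ∈ ·) hσR
    have ha1 : a1 ∉ σ := fun h => hmem a1 |>.mp h rfl
    refine ⟨(List.replicate 2 (a1 :: σ)).flatten,
      recBalanced_flatten_replicate (List.nodup_cons.mpr ⟨ha1, hσ⟩)
        fun a => List.mem_cons.mpr ((eq_or_ne a a1).imp id (hmem a).mpr), ?_⟩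
    simpa using receives_eq_of_seqAlloc_avoids ha1 hs1 hs2ne hs2 hσo

/-- For `k = 2`, with `s1, s2` agent `a_1`'s top two items, there is a
recursively balanced policy giving `a_1` exactly `{s1, s2}` iff the bipartite graph on
`A \ {a_1}` and `I \ {s1}` joining `a` to `o` when `a` strictly prefers `o` to `s2`
admits a matching saturating `A \ {a_1}`. -/
theorem top2_possible_set_recursively_balanced
    {ι : Type} [Fintype ι] [DecidableEq ι] {n : ℕ} (hn : 0 < n)
    (hcard : Fintype.card ι = 2 * n)
    (P : Fin n → LinearOrder ι) (a1 : Fin n) (s1 s2 : ι)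
    (hs1 : ∀ x : ι, (P a1).le x s1)
    (hs2ne : s2 ≠ s1) (hs2 : ∀ x : ι, x ≠ s1 → (P a1).le x s2) :
    (∃ π : List (Fin n), RecBalanced n 2 π ∧ receives P π a1 = {s1, s2}) ↔
      ∃ f : Fin n → ι, Set.InjOn f {a : Fin n | a ≠ a1} ∧
        ∀ a : Fin n, a ≠ a1 → f a ≠ s1 ∧ (P a).lt s2 (f a) :=
  top2_possible_set_recursively_balanced_general hcard P a1 s1 s2 hs1 hs2ne hs2
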